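/- Let N ≥ 2. Suppose: (β_n) ⊆ ℝ with n·β_n → β ≠ 0; row vectors b_n ∈ ℝ^{N−1} and column vectors c_n ∈ ℝ^{N−1} such that the sequences n·b_n and n·c_n are bounded; (N−1)×(N−1) matrices D_n converging entrywise to an invertible matrix D; scalars v_n with n·v_n → v ∈ ℝ; and vectors w_n ∈ ℝ^{N−1} such that n·w_n is bounded. Then for all sufficiently large n the block matrix M_n = [[β_n, b_n],[c_n, D_n]] is invertible, and the solution u_n = (u_n^1, u_n^·) ∈ ℝ × ℝ^{N−1} of M_n u_n = (v_n, w_n) satisfies u_n^1 → v/β and u_n^· → 0 as n → ∞. -/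

import Mathlib

/-!
Eliminate `u·` through the invertible block `D`: with the Schur complement `s = β - b D⁻¹ c`,
`det M = det D · s`, and `M u = (v, w)` is solved by `u¹ = (v - b D⁻¹ w) / s`,
`u· = D⁻¹ (w - u¹ c)`. As `D⁻¹ → Dl⁻¹` while `n b`, `n c`, `n w` stay bounded, the products
`b D⁻¹ c` and `b D⁻¹ w` are `o(1/n)`, so `n s → β ≠ 0`. Hence `M` is eventually invertible,
`u¹ = (n v - n b D⁻¹ w) / (n s) → v / β`, and `u· → Dl⁻¹ (0 - (v / β) • 0) = 0`.
-/

open Matrix Filter Topology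

section Algebra

variable {K m : Type*} [Field K] [Fintype m] [DecidableEq m]

def borderedMatrix (β : K) (b c : m → K) (D : Matrix m m K) : Matrix (Fin 1 ⊕ m) (Fin 1 ⊕ m) K :=
  fromBlocks (of fun _ _ => β) (of fun _ j => b j) (of fun i _ => c i) D

noncomputable def borderedSchur (β : K) (b c : m → K) (D : Matrix m m K) : K := β - b ⬝ᵥ (D⁻¹ *ᵥ c)

omit [DecidableEq m] in
theorem borderedMatrix_mulVec (β : K) (b c : m → K) (D : Matrix m m K) (u : Fin 1 ⊕ m → K) :
    borderedMatrix β b c D *ᵥ u =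
      Sum.elim (fun _ => β * u (.inl 0) + b ⬝ᵥ (u ∘ .inr)) (u (.inl 0) • c + D *ᵥ (u ∘ .inr)) := by
  rw [borderedMatrix, fromBlocks_mulVec]
  ext (i | i) <;> simp [mulVec, dotProduct, mul_comm]

theorem det_borderedMatrix (β : K) (b c : m → K) (D : Matrix m m K) (hD : IsUnit D.det) :
    (borderedMatrix β b c D).det = D.det * borderedSchur β b c D := by
  let := D.invertibleOfIsUnitDet hD
  rw [borderedMatrix, det_fromBlocks₂₂, det_fin_one, invOf_eq_nonsing_inv]
  simp only [borderedSchur, Matrix.sub_apply, of_apply, mul_apply, mulVec, dotProduct,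
    Finset.sum_mul, Finset.mul_sum, mul_assoc]
  rw [Finset.sum_comm]

theorem isUnit_det_borderedMatrix {β : K} {b c : m → K} {D : Matrix m m K} (hD : IsUnit D.det)
    (hs : IsUnit (borderedSchur β b c D)) : IsUnit (borderedMatrix β b c D).det := by
  rw [det_borderedMatrix _ _ _ _ hD]
  exact hD.mul hs

theorem borderedMatrix_solution {β : K} {b c : m → K} {D : Matrix m m K} (hD : IsUnit D.det)
    {u : Fin 1 ⊕ m → K} {v : K} {w : m → K}
    (h : borderedMatrix β b c D *ᵥ u = Sum.elim (fun _ => v) w) :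
    u ∘ .inr = D⁻¹ *ᵥ (w - u (.inl 0) • c) ∧
      borderedSchur β b c D * u (.inl 0) = v - b ⬝ᵥ (D⁻¹ *ᵥ w) := by
  rw [borderedMatrix_mulVec] at h
  have h₁ := congrFun h (.inl 0)
  have h₂ : u (.inl 0) • c + D *ᵥ (u ∘ .inr) = w := funext fun i => congrFun h (.inr i)
  simp only [Sum.elim_inl] at h₁
  have hinr : u ∘ .inr = D⁻¹ *ᵥ (w - u (.inl 0) • c) := by
    rw [← h₂, add_sub_cancel_left, mulVec_mulVec, nonsing_inv_mul _ hD, one_mulVec]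
  refine ⟨hinr, ?_⟩
  rw [hinr, mulVec_sub, dotProduct_sub, mulVec_smul, dotProduct_smul, smul_eq_mul] at h₁
  rw [borderedSchur]
  linear_combination h₁

end Algebra

section Limits

variable {ι m o : Type*} {l : Filter ι}

theorem tendsto_zero_of_isBoundedUnder_natCast_mul {𝕜 : Type*} [RCLike 𝕜] {f : ℕ → 𝕜}
    (h : IsBoundedUnder (· ≤ ·) atTop fun n : ℕ => ‖(n : 𝕜) * f n‖) : Tendsto f atTop (𝓝 0) := by
  refine (isBoundedUnder_le_mul_tendsto_zero h tendsto_inv_atTop_nhds_zero_nat).congr' ?_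
  filter_upwards [eventually_ne_atTop 0] with n hn
  rw [mul_comm, inv_mul_cancel_left₀ (Nat.cast_ne_zero.mpr hn)]

theorem isBoundedUnder_natCast_mul_apply {x : ℕ → m → ℝ}
    (h : ∃ C : ℝ, ∀ (n : ℕ) (i : m), |(n : ℝ) * x n i| ≤ C) (i : m) :
    IsBoundedUnder (· ≤ ·) atTop fun n : ℕ => ‖(n : ℝ) * x n i‖ :=
  let ⟨C, hC⟩ := h
  isBoundedUnder_of ⟨C, fun n => hC n i⟩

theorem tendsto_dotProduct_zero {R : Type*} [NonUnitalSeminormedRing R] [Fintype m]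
    {x y : ι → m → R} (hx : ∀ i, IsBoundedUnder (· ≤ ·) l fun k => ‖x k i‖)
    (hy : Tendsto y l (𝓝 0)) : Tendsto (fun k => x k ⬝ᵥ y k) l (𝓝 0) := by
  simpa only [dotProduct, Finset.sum_const_zero] using tendsto_finsetSum Finset.univ fun i _ =>
    isBoundedUnder_le_mul_tendsto_zero (hx i) (tendsto_pi_nhds.1 hy i)

theorem tendsto_zero_of_abs_natCast_mul_le {x : ℕ → m → ℝ}
    (h : ∃ C : ℝ, ∀ (n : ℕ) (i : m), |(n : ℝ) * x n i| ≤ C) : Tendsto x atTop (𝓝 0) :=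
  tendsto_pi_nhds.2 fun i =>
    tendsto_zero_of_isBoundedUnder_natCast_mul (isBoundedUnder_natCast_mul_apply h i)

theorem tendsto_natCast_mul_dotProduct_zero [Fintype m] {x y : ℕ → m → ℝ}
    (hx : ∃ C : ℝ, ∀ (n : ℕ) (i : m), |(n : ℝ) * x n i| ≤ C) (hy : Tendsto y atTop (𝓝 0)) :
    Tendsto (fun n : ℕ => (n : ℝ) * (x n ⬝ᵥ y n)) atTop (𝓝 0) := by
  simpa only [smul_dotProduct, smul_eq_mul] using
    tendsto_dotProduct_zero (x := fun n : ℕ => (n : ℝ) • x n)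
      (isBoundedUnder_natCast_mul_apply hx) hy

theorem Filter.Tendsto.of_mul_eventuallyEq {K : Type*} [Field K] [TopologicalSpace K]
    [IsTopologicalRing K] [ContinuousInv₀ K] [T1Space K] {a b x : ι → K} {a₀ b₀ : K}
    (ha : Tendsto a l (𝓝 a₀)) (ha₀ : a₀ ≠ 0) (hb : Tendsto b l (𝓝 b₀))
    (h : ∀ᶠ k in l, a k * x k = b k) : Tendsto x l (𝓝 (b₀ / a₀)) := by
  refine (hb.div ha ha₀).congr' ?_
  filter_upwards [h, ha.eventually_ne ha₀] with k hk hak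
  rw [Pi.div_apply, div_eq_iff hak, mul_comm, hk]

theorem Filter.Tendsto.matrix_mulVec {R : Type*} [TopologicalSpace R]
    [NonUnitalNonAssocSemiring R] [IsTopologicalSemiring R] [Fintype o]
    {A : ι → Matrix m o R} {x : ι → o → R} {A₀ : Matrix m o R} {x₀ : o → R}
    (hA : Tendsto A l (𝓝 A₀)) (hx : Tendsto x l (𝓝 x₀)) :
    Tendsto (fun k => A k *ᵥ x k) l (𝓝 (A₀ *ᵥ x₀)) :=
  ((continuous_fst.matrix_mulVec continuous_snd).tendsto (A₀, x₀)).comp (hA.prodMk_nhds hx)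

theorem Filter.Tendsto.matrix_inv {K : Type*} [Field K] [TopologicalSpace K]
    [IsTopologicalRing K] [ContinuousInv₀ K] [Fintype o] [DecidableEq o]
    {A : ι → Matrix o o K} {A₀ : Matrix o o K} (hA : Tendsto A l (𝓝 A₀)) (h : IsUnit A₀.det) :
    Tendsto (fun k => (A k)⁻¹) l (𝓝 A₀⁻¹) := by
  refine (continuousAt_matrix_inv A₀ ?_).tendsto.comp hA
  rw [Ring.inverse_eq_inv']
  exact continuousAt_inv₀ h.ne_zero

end Limits

theorem block_matrix_solution_limit_general
    (N : ℕ)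
    (β : ℕ → ℝ) (βl : ℝ)
    (hβ : Tendsto (fun n : ℕ => (n : ℝ) * β n) atTop (𝓝 βl)) (hβne : βl ≠ 0)
    (b c : ℕ → Fin (N - 1) → ℝ)
    (hb : ∃ C : ℝ, ∀ (n : ℕ) (i : Fin (N - 1)), |(n : ℝ) * b n i| ≤ C)
    (hc : ∃ C : ℝ, ∀ (n : ℕ) (i : Fin (N - 1)), |(n : ℝ) * c n i| ≤ C)
    (D : ℕ → Matrix (Fin (N - 1)) (Fin (N - 1)) ℝ)
    (Dl : Matrix (Fin (N - 1)) (Fin (N - 1)) ℝ)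
    (hD : ∀ i j, Tendsto (fun n => D n i j) atTop (𝓝 (Dl i j)))
    (hDl : IsUnit Dl.det)
    (v : ℕ → ℝ) (vl : ℝ) (hv : Tendsto (fun n : ℕ => (n : ℝ) * v n) atTop (𝓝 vl))
    (w : ℕ → Fin (N - 1) → ℝ)
    (hw : ∃ C : ℝ, ∀ (n : ℕ) (i : Fin (N - 1)), |(n : ℝ) * w n i| ≤ C)
    (M : ℕ → Matrix (Fin 1 ⊕ Fin (N - 1)) (Fin 1 ⊕ Fin (N - 1)) ℝ)
    (hM : ∀ n, M n = Matrix.fromBlocks (Matrix.of fun _ _ => β n)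
      (Matrix.of fun _ j => b n j) (Matrix.of fun i _ => c n i) (D n))
    (u : ℕ → Fin 1 ⊕ Fin (N - 1) → ℝ)
    (hu : ∀ n, u n = (M n)⁻¹ *ᵥ Sum.elim (fun _ => v n) (w n)) :
    (∃ n₀ : ℕ, ∀ n ≥ n₀, IsUnit (M n).det) ∧
    Tendsto (fun n => u n (Sum.inl 0)) atTop (𝓝 (vl / βl)) ∧
    ∀ k, Tendsto (fun n => u n (Sum.inr k)) atTop (𝓝 0) := by
  have hc₀ := tendsto_zero_of_abs_natCast_mul_le hc
  have hw₀ := tendsto_zero_of_abs_natCast_mul_le hw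
  have hD' : Tendsto D atTop (𝓝 Dl) := tendsto_pi_nhds.2 fun i => tendsto_pi_nhds.2 (hD i)
  have hDinv := hD'.matrix_inv hDl
  replace hM : ∀ n, M n = borderedMatrix (β n) (b n) (c n) (D n) := hM
  set s := fun n => borderedSchur (β n) (b n) (c n) (D n)
  set q := fun n => b n ⬝ᵥ ((D n)⁻¹ *ᵥ w n)
  have hs : Tendsto (fun n : ℕ => (n : ℝ) * s n) atTop (𝓝 βl) := by
    simpa [s, borderedSchur, mul_sub] using hβ.sub
      (tendsto_natCast_mul_dotProduct_zero hb (by simpa using hDinv.matrix_mulVec hc₀))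
  have hq : Tendsto (fun n : ℕ => (n : ℝ) * q n) atTop (𝓝 0) :=
    tendsto_natCast_mul_dotProduct_zero hb (by simpa using hDinv.matrix_mulVec hw₀)
  have hsol : ∀ᶠ n : ℕ in atTop, IsUnit (M n).det ∧
      u n ∘ .inr = (D n)⁻¹ *ᵥ (w n - u n (.inl 0) • c n) ∧ s n * u n (.inl 0) = v n - q n := by
    have hdet : ∀ᶠ n in atTop, (D n).det ≠ 0 :=
      ((continuous_id.matrix_det.tendsto Dl).comp hD').eventually_ne hDl.ne_zero
    filter_upwards [hdet, hs.eventually_ne hβne] with n hDn hsn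
    have hMn : IsUnit (M n).det :=
      hM n ▸ isUnit_det_borderedMatrix hDn.isUnit (right_ne_zero_of_mul hsn).isUnit
    exact ⟨hMn, borderedMatrix_solution hDn.isUnit
      (by rw [← hM n, hu n, mulVec_mulVec, mul_nonsing_inv _ hMn, one_mulVec])⟩
  have hu₁ : Tendsto (fun n => u n (.inl 0)) atTop (𝓝 (vl / βl)) := by
    refine sub_zero vl ▸ hs.of_mul_eventuallyEq hβne (hv.sub hq) ?_
    filter_upwards [hsol] with n hn
    linear_combination (n : ℝ) * hn.2.2
  have hu₂ : Tendsto (fun n => u n ∘ .inr) atTop (𝓝 0) := by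
    have hlim := hDinv.matrix_mulVec (hw₀.sub (hu₁.smul hc₀))
    rw [smul_zero, sub_zero, mulVec_zero] at hlim
    exact hlim.congr' (hsol.mono fun n hn => hn.2.1.symm)
  exact ⟨eventually_atTop.1 (hsol.mono fun n hn => hn.1), hu₁, fun k => tendsto_pi_nhds.1 hu₂ k⟩

/-- Schur-complement / Gauss elimination asymptotics for the block
matrices `Mₙ = [[βₙ, bₙ],[cₙ, Dₙ]]`. -/
theorem block_matrix_solution_limit
    (N : ℕ) (hN : 2 ≤ N)
    (β : ℕ → ℝ) (βl : ℝ)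
    (hβ : Tendsto (fun n : ℕ => (n : ℝ) * β n) atTop (𝓝 βl)) (hβne : βl ≠ 0)
    (b c : ℕ → Fin (N - 1) → ℝ)
    (hb : ∃ C : ℝ, ∀ (n : ℕ) (i : Fin (N - 1)), |(n : ℝ) * b n i| ≤ C)
    (hc : ∃ C : ℝ, ∀ (n : ℕ) (i : Fin (N - 1)), |(n : ℝ) * c n i| ≤ C)
    (D : ℕ → Matrix (Fin (N - 1)) (Fin (N - 1)) ℝ)
    (Dl : Matrix (Fin (N - 1)) (Fin (N - 1)) ℝ)
    (hD : ∀ i j, Tendsto (fun n => D n i j) atTop (𝓝 (Dl i j)))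
    (hDl : IsUnit Dl.det)
    (v : ℕ → ℝ) (vl : ℝ) (hv : Tendsto (fun n : ℕ => (n : ℝ) * v n) atTop (𝓝 vl))
    (w : ℕ → Fin (N - 1) → ℝ)
    (hw : ∃ C : ℝ, ∀ (n : ℕ) (i : Fin (N - 1)), |(n : ℝ) * w n i| ≤ C)
    (M : ℕ → Matrix (Fin 1 ⊕ Fin (N - 1)) (Fin 1 ⊕ Fin (N - 1)) ℝ)
    (hM : ∀ n, M n = Matrix.fromBlocks (Matrix.of fun _ _ => β n)
      (Matrix.of fun _ j => b n j) (Matrix.of fun i _ => c n i) (D n))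
    (u : ℕ → Fin 1 ⊕ Fin (N - 1) → ℝ)
    (hu : ∀ n, u n = (M n)⁻¹ *ᵥ Sum.elim (fun _ => v n) (w n)) :
    (∃ n₀ : ℕ, ∀ n ≥ n₀, IsUnit (M n).det) ∧
    Tendsto (fun n => u n (Sum.inl 0)) atTop (𝓝 (vl / βl)) ∧
    ∀ k, Tendsto (fun n => u n (Sum.inr k)) atTop (𝓝 0) :=
  block_matrix_solution_limit_general N β βl hβ hβne b c hb hc D Dl hD hDl v vl hv w hw M hM u hu
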